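/- arXiv:2603.13953 — 3 statements merged into one kernel-verified Lean document; each statement's English description precedes it below -/
import Mathlib

section
/- Let k ≥ 2 be an integer, let i, j ∈ {0,1,…,k−1}, and let ℓ be an integer with max(0, i+j−k) ≤ ℓ, ℓ ≤ i−1 and ℓ ≤ j−1. Then the number of permutations π of {1,…,k} with N_π(i,j) = ℓ, π(i+1) ≤ j, and π⁻¹(j+1) ≤ i equals i!·j!·(k−i−1)!·(k−j−1)! / ((i−ℓ−1)!·(j−ℓ−1)!·(k+ℓ−i−j)!·ℓ!). -/
open Nat Finset

/-- `Nperm k π i j` is the number of `m ∈ {1,…,k}` with `m ≤ i` and `π(m) ≤ j`,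
where the permutation `π` of `{1,…,k}` is represented 0-indexed on `Fin k`. -/
def Nperm (k : ℕ) (π : Equiv.Perm (Fin k)) (i j : ℕ) : ℕ :=
  (Finset.univ.filter fun m : Fin k => (m : ℕ) < i ∧ ((π m : ℕ) < j)).card

section Aux

/-- The "class" of a value `x : Fin k` relative to the threshold `j`:
`0` if `x < j`, `1` if `x = j`, `2` if `x > j`. -/
def cls {k : ℕ} (j : ℕ) (x : Fin k) : Fin 3 :=
  if (x : ℕ) < j then 0 else if (x : ℕ) = j then 1 else 2

lemma cls_eq_zero {k j : ℕ} {x : Fin k} : cls j x = 0 ↔ (x : ℕ) < j := by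
  unfold cls; split_ifs with h1 h2 <;> simp_all

lemma cls_eq_one {k j : ℕ} (hjk : j < k) {x : Fin k} : cls j x = 1 ↔ x = ⟨j, hjk⟩ := by
  unfold cls
  constructor
  · intro h
    split_ifs at h with h1 h2
    · exact absurd h (by decide)
    · exact Fin.ext h2
    · exact absurd h (by decide)
  · rintro rfl
    simp

lemma fin3_cases (x : Fin 3) : x = 0 ∨ x = 1 ∨ x = 2 := by omega

/-- The profile that `cls j ∘ π` must satisfy for `π` to be counted. -/
def Pf {k : ℕ} (i j ℓ : ℕ) (hik : i < k) (f : Fin k → Fin 3) : Prop :=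
  #(univ.filter fun m : Fin k => (m : ℕ) < i ∧ f m = 0) = ℓ ∧
  f ⟨i, hik⟩ = 0 ∧
  (∃ m : Fin k, (m : ℕ) < i ∧ f m = 1) ∧
  #(univ.filter fun m : Fin k => f m = 0) = j ∧
  #(univ.filter fun m : Fin k => f m = 1) = 1

instance Pf.dec {k : ℕ} (i j ℓ : ℕ) (hik : i < k) : DecidablePred (Pf i j ℓ hik) := fun f => by
  unfold Pf; infer_instance

lemma card_val_lt {k : ℕ} (i : ℕ) (h : i ≤ k) :
    ((univ : Finset (Fin k)).filter fun m : Fin k => (m : ℕ) < i).card = i := by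
  have : ((univ : Finset (Fin k)).filter fun m : Fin k => (m : ℕ) < i).card
      = ((univ : Finset (Fin i))).card := by
    refine Finset.card_bij' (fun (m : Fin k) hm => (⟨(m : ℕ), (Finset.mem_filter.mp hm).2⟩ : Fin i))
      (fun m _ => Fin.castLE h m) ?_ ?_ ?_ ?_
    · intro a ha; exact mem_univ _
    · intro a ha; simp [Fin.castLE, a.isLt]
    · intro a ha; rfl
    · intro a ha; rfl
  simpa using this

lemma card_filter_comp {k : ℕ} (π : Equiv.Perm (Fin k)) (p : Fin k → Prop) [DecidablePred p] :
    ((univ : Finset (Fin k)).filter fun m => p (π m)).card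
      = ((univ : Finset (Fin k)).filter p).card := by
  refine Finset.card_bij (fun m _ => π m) ?_ ?_ ?_
  · intro a ha; simp only [mem_filter, mem_univ, true_and] at ha ⊢; exact ha
  · intro a ha b hb hab; exact π.injective hab
  · intro b hb
    exact ⟨π.symm b, by simp only [mem_filter, mem_univ, true_and] at hb ⊢; simpa using hb, by simp⟩

lemma fiber_sum {k : ℕ} (f : Fin k → Fin 3) :
    #(univ.filter fun m : Fin k => f m = 0) + #(univ.filter fun m : Fin k => f m = 1)
      + #(univ.filter fun m : Fin k => f m = 2) = k := by
  classical
  have e1 := Finset.card_filter_add_card_filter_not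
    (s := (univ : Finset (Fin k))) (p := fun m => f m = 0)
  have e2 := Finset.card_filter_add_card_filter_not
    (s := (univ.filter fun m : Fin k => ¬ f m = 0)) (p := fun m => f m = 1)
  rw [filter_filter, filter_filter] at e2
  have r1 : (univ.filter fun m : Fin k => ¬ f m = 0 ∧ f m = 1)
      = univ.filter fun m : Fin k => f m = 1 :=
    filter_congr (by intro x _; omega)
  have r2 : (univ.filter fun m : Fin k => ¬ f m = 0 ∧ ¬ f m = 1)
      = univ.filter fun m : Fin k => f m = 2 :=
    filter_congr (by intro x _; omega)
  rw [r1, r2] at e2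
  simp only [Finset.card_univ, Fintype.card_fin] at e1
  omega

lemma cls_fiber0 {k j : ℕ} (hjk : j < k) :
    #(univ.filter fun x : Fin k => cls j x = 0) = j := by
  rw [filter_congr (fun x _ => (cls_eq_zero (j := j) (x := x)))]
  exact card_val_lt j hjk.le

lemma cls_fiber1 {k j : ℕ} (hjk : j < k) :
    #(univ.filter fun x : Fin k => cls j x = 1) = 1 := by
  have : (univ.filter fun x : Fin k => cls j x = 1) = {⟨j, hjk⟩} := by
    ext x; simp [cls_eq_one hjk]
  rw [this, card_singleton]

lemma cls_fiber2 {k j : ℕ} (hjk : j < k) :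
    #(univ.filter fun x : Fin k => cls j x = 2) = k - j - 1 := by
  have := fiber_sum (cls (k := k) j)
  rw [cls_fiber0 hjk, cls_fiber1 hjk] at this
  omega

lemma card_split3 {k : ℕ} (i : ℕ) (p : Fin k → Prop) [DecidablePred p] :
    #(univ.filter p) = #(univ.filter fun m : Fin k => (m : ℕ) < i ∧ p m)
      + #(univ.filter fun m : Fin k => (m : ℕ) = i ∧ p m)
      + #(univ.filter fun m : Fin k => i < (m : ℕ) ∧ p m) := by
  classical
  have e1 := Finset.card_filter_add_card_filter_not
    (s := (univ.filter p)) (p := fun m : Fin k => (m : ℕ) < i)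
  have e2 := Finset.card_filter_add_card_filter_not
    (s := ((univ.filter p).filter fun m : Fin k => ¬ (m : ℕ) < i))
    (p := fun m : Fin k => (m : ℕ) = i)
  simp only [filter_filter] at e1 e2
  have r1 : (univ.filter fun m : Fin k => p m ∧ (m : ℕ) < i)
      = univ.filter fun m : Fin k => (m : ℕ) < i ∧ p m := filter_congr (by intro x _; tauto)
  have r2 : (univ.filter fun m : Fin k => (p m ∧ ¬ (m : ℕ) < i) ∧ (m : ℕ) = i)
      = univ.filter fun m : Fin k => (m : ℕ) = i ∧ p m := filter_congr (by
        intro x _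
        constructor
        · rintro ⟨⟨hp, h1⟩, h2⟩; exact ⟨h2, hp⟩
        · rintro ⟨h1, hp⟩; exact ⟨⟨hp, by omega⟩, h1⟩)
  have r3 : (univ.filter fun m : Fin k => (p m ∧ ¬ (m : ℕ) < i) ∧ ¬ (m : ℕ) = i)
      = univ.filter fun m : Fin k => i < (m : ℕ) ∧ p m := filter_congr (by
        intro x _
        constructor
        · rintro ⟨⟨hp, h1⟩, h2⟩; exact ⟨by omega, hp⟩
        · rintro ⟨h1, hp⟩; exact ⟨⟨hp, by omega⟩, by omega⟩)
  rw [r1] at e1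
  rw [r2, r3] at e2
  omega

lemma cond_iff {k i j ℓ : ℕ} (hik : i < k) (hjk : j < k) (π : Equiv.Perm (Fin k)) :
    (Nperm k π i j = ℓ ∧ ((π ⟨i, hik⟩ : ℕ) < j) ∧ ((π.symm ⟨j, hjk⟩ : ℕ) < i))
      ↔ Pf i j ℓ hik (cls j ∘ π) := by
  classical
  unfold Pf Nperm
  simp only [Function.comp_apply]
  have hr : (univ.filter fun m : Fin k => (m : ℕ) < i ∧ cls j (π m) = 0)
      = univ.filter fun m : Fin k => (m : ℕ) < i ∧ ((π m : ℕ) < j) :=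
    filter_congr fun m _ => and_congr_right fun _ => cls_eq_zero
  constructor
  · rintro ⟨hN, hπi, hπj⟩
    refine ⟨by rw [hr]; exact hN, cls_eq_zero.mpr hπi, ?_, ?_, ?_⟩
    · exact ⟨π.symm ⟨j, hjk⟩, hπj, by
        show cls j (π (π.symm ⟨j, hjk⟩)) = 1
        rw [Equiv.apply_symm_apply]
        exact (cls_eq_one hjk).mpr rfl⟩
    · rw [card_filter_comp π (fun x => cls j x = 0)]
      exact cls_fiber0 hjk
    · rw [card_filter_comp π (fun x => cls j x = 1)]
      exact cls_fiber1 hjk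
  · rintro ⟨h1, h2, h3, h4, h5⟩
    refine ⟨by rw [← hr]; exact h1, cls_eq_zero.mp h2, ?_⟩
    obtain ⟨m, hmi, hm1⟩ := h3
    have hm : π m = ⟨j, hjk⟩ := (cls_eq_one hjk).mp hm1
    have : π.symm ⟨j, hjk⟩ = m := by rw [← hm, Equiv.symm_apply_apply]
    rw [this]; exact hmi

lemma fiber_perm_card {k j : ℕ} (hjk : j < k) (f : Fin k → Fin 3)
    (h0 : #(univ.filter fun m : Fin k => f m = 0) = j)
    (h1 : #(univ.filter fun m : Fin k => f m = 1) = 1) :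
    #((univ : Finset (Equiv.Perm (Fin k))).filter fun π : Equiv.Perm (Fin k) => cls j ∘ π = f)
      = j ! * (k - j - 1)! := by
  classical
  rw [← Fintype.card_subtype]
  have e : {π : Equiv.Perm (Fin k) // cls j ∘ π = f}
      ≃ (∀ b : Fin 3, {m : Fin k // f m = b} ≃ {x : Fin k // cls j x = b}) :=
  { toFun := fun p b => p.1.subtypeEquiv (fun m => by
      rw [← congrFun p.2 m]; exact Iff.rfl)
    invFun := fun e => ⟨Equiv.ofFiberEquiv e, funext fun m => Equiv.ofFiberEquiv_map e m⟩
    left_inv := fun p => Subtype.ext (Equiv.ext fun m => rfl)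
    right_inv := fun e => funext fun b => Equiv.ext fun mp => Subtype.ext (by
      obtain ⟨m, hm⟩ := mp
      subst hm
      rfl) }
  rw [Fintype.card_congr e, Fintype.card_pi]
  have hf2 : #(univ.filter fun m : Fin k => f m = 2) = k - j - 1 := by
    have := fiber_sum f; omega
  have key : ∀ b : Fin 3,
      Fintype.card ({m : Fin k // f m = b} ≃ {x : Fin k // cls j x = b})
        = (#(univ.filter fun x : Fin k => cls j x = b))! := by
    intro b
    have hcards : Fintype.card {m : Fin k // f m = b}
        = Fintype.card {x : Fin k // cls j x = b} := by
      rw [Fintype.card_subtype, Fintype.card_subtype]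
      rcases fin3_cases b with rfl | rfl | rfl
      · rw [h0, cls_fiber0 hjk]
      · rw [h1, cls_fiber1 hjk]
      · rw [hf2, cls_fiber2 hjk]
    rw [Fintype.card_equiv (Fintype.equivOfCardEq hcards), hcards, Fintype.card_subtype]
  simp only [key]
  rw [Fin.prod_univ_three, cls_fiber0 hjk, cls_fiber1 hjk, cls_fiber2 hjk]
  simp [Nat.factorial]

lemma count_Pf {k i j ℓ : ℕ} (hik : i < k) (hjk : j < k)
    (hℓ1 : i + j ≤ k + ℓ) (hℓ2 : ℓ + 1 ≤ i) (hℓ3 : ℓ + 1 ≤ j) :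
    #((univ : Finset (Fin k → Fin 3)).filter (Pf i j ℓ hik))
      = i.choose (ℓ + 1) * (ℓ + 1) * ((k - i - 1).choose (j - ℓ - 1)) := by
  classical
  have hP1 : #(univ.filter fun m : Fin k => (m : ℕ) < i) = i := card_val_lt i hik.le
  have hP2 : #(univ.filter fun m : Fin k => i < (m : ℕ)) = k - i - 1 := by
    have h3 := card_split3 (k := k) i (fun _ => True)
    have t1 : (univ.filter fun m : Fin k => (m : ℕ) < i ∧ True)
        = univ.filter fun m : Fin k => (m : ℕ) < i := filter_congr (by intro x _; simp)
    have t2 : (univ.filter fun m : Fin k => i < (m : ℕ) ∧ True)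
        = univ.filter fun m : Fin k => i < (m : ℕ) := filter_congr (by intro x _; simp)
    have t3 : (univ.filter fun m : Fin k => (m : ℕ) = i ∧ True) = {⟨i, hik⟩} := by
      ext x
      simp only [mem_filter, mem_univ, true_and, and_true, mem_singleton, Fin.ext_iff]
    have t0 : #(univ.filter fun _ : Fin k => True) = k := by simp
    rw [t0, t1, t2, t3, card_singleton, hP1] at h3
    omega
  have huniq : ∀ (f : Fin k → Fin 3) (m₀ : Fin k),
      (univ.filter fun m : Fin k => f m = 1) = {m₀} → ∀ x : Fin k, f x = 1 ↔ x = m₀ := by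
    intro f m₀ hm x
    have : x ∈ univ.filter (fun m : Fin k => f m = 1) ↔ x ∈ ({m₀} : Finset (Fin k)) := by rw [hm]
    simpa using this
  have hm0lt : ∀ f, Pf i j ℓ hik f → ∀ m₀ : Fin k,
      (univ.filter fun m : Fin k => f m = 1) = {m₀} → (m₀ : ℕ) < i := by
    intro f hPf m₀ hm
    obtain ⟨x, hxi, hx1⟩ := hPf.2.2.1
    rwa [(huniq f m₀ hm x).mp hx1] at hxi
  have hWcard : ∀ f, Pf i j ℓ hik f → ∀ m₀ : Fin k,
      (univ.filter fun m : Fin k => f m = 1) = {m₀} →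
      #(univ.filter fun m : Fin k => (m : ℕ) < i ∧ f m ≠ 2) = ℓ + 1 := by
    intro f hPf m₀ hm
    have split : (univ.filter fun m : Fin k => (m : ℕ) < i ∧ f m ≠ 2)
        = (univ.filter fun m : Fin k => (m : ℕ) < i ∧ f m = 0)
          ∪ (univ.filter fun m : Fin k => (m : ℕ) < i ∧ f m = 1) := by
      ext x
      simp only [mem_filter, mem_union, mem_univ, true_and]
      omega
    have hone : (univ.filter fun m : Fin k => (m : ℕ) < i ∧ f m = 1) = {m₀} := by
      ext x
      simp only [mem_filter, mem_univ, true_and, mem_singleton]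
      constructor
      · rintro ⟨_, hx1⟩; exact (huniq f m₀ hm x).mp hx1
      · intro hx; subst hx; exact ⟨hm0lt f hPf x hm, (huniq f x hm x).mpr rfl⟩
    rw [split, card_union_of_disjoint, hPf.1, hone, card_singleton]
    rw [Finset.disjoint_left]
    intro x hx hx'
    simp only [mem_filter, mem_univ, true_and] at hx hx'
    omega
  have hTcard : ∀ f, Pf i j ℓ hik f →
      #(univ.filter fun m : Fin k => i < (m : ℕ) ∧ f m = 0) = j - ℓ - 1 := by
    intro f hPf
    have h3 := card_split3 (k := k) i (fun m => f m = 0)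
    have hmid : (univ.filter fun m : Fin k => (m : ℕ) = i ∧ f m = 0) = {⟨i, hik⟩} := by
      ext x
      simp only [mem_filter, mem_univ, true_and, mem_singleton]
      constructor
      · rintro ⟨h1, _⟩; exact Fin.ext h1
      · rintro rfl; exact ⟨rfl, hPf.2.1⟩
    rw [hmid, card_singleton, hPf.1, hPf.2.2.2.1] at h3
    omega
  have hD : #((((univ.filter fun m : Fin k => (m : ℕ) < i).powersetCard (ℓ + 1)).sigma
        fun W => W) ×ˢ ((univ.filter fun m : Fin k => i < (m : ℕ)).powersetCard (j - ℓ - 1)))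
      = i.choose (ℓ + 1) * (ℓ + 1) * ((k - i - 1).choose (j - ℓ - 1)) := by
    rw [card_product, card_sigma,
      Finset.sum_congr rfl (fun W hW => (mem_powersetCard.mp hW).2),
      sum_const, smul_eq_mul, card_powersetCard, card_powersetCard, hP1, hP2]
  rw [← hD]
  refine Finset.card_bij (fun f hf =>
    ((⟨univ.filter fun m : Fin k => (m : ℕ) < i ∧ f m ≠ 2,
      (univ.filter fun m : Fin k => f m = 1).min' (Finset.card_pos.mp (by
        rw [(Finset.mem_filter.mp hf).2.2.2.2.2]; norm_num))⟩ : Σ _ : Finset (Fin k), Fin k),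
      univ.filter fun m : Fin k => i < (m : ℕ) ∧ f m = 0)) ?_ ?_ ?_
  · intro f hf
    have hPf := (Finset.mem_filter.mp hf).2
    obtain ⟨m₀, hm₀⟩ := Finset.card_eq_one.mp hPf.2.2.2.2
    have hminval : (univ.filter fun m : Fin k => f m = 1).min'
        (Finset.card_pos.mp (by rw [(Finset.mem_filter.mp hf).2.2.2.2.2]; norm_num)) = m₀ := by
      simp only [hm₀]
      exact Finset.min'_singleton m₀
    rw [Finset.mem_product]
    constructor
    · rw [Finset.mem_sigma]
      constructor
      · rw [mem_powersetCard]
        refine ⟨fun x hx => ?_, hWcard f hPf m₀ hm₀⟩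
        simp only [mem_filter, mem_univ, true_and] at hx ⊢
        exact hx.1
      · simp only [hminval, mem_filter, mem_univ, true_and]
        refine ⟨hm0lt f hPf m₀ hm₀, ?_⟩
        have := (huniq f m₀ hm₀ m₀).mpr rfl
        omega
    · rw [mem_powersetCard]
      refine ⟨fun x hx => ?_, hTcard f hPf⟩
      simp only [mem_filter, mem_univ, true_and] at hx ⊢
      exact hx.1
  · intro f hf g hg heq
    have hPf := (Finset.mem_filter.mp hf).2
    have hPg := (Finset.mem_filter.mp hg).2
    obtain ⟨a, ha⟩ := Finset.card_eq_one.mp hPf.2.2.2.2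
    obtain ⟨b, hb⟩ := Finset.card_eq_one.mp hPg.2.2.2.2
    have h1 := congrArg Prod.fst heq
    have hT := congrArg Prod.snd heq
    have hW := congrArg Sigma.fst h1
    have hmin := congrArg Sigma.snd h1
    simp only at hW hmin hT
    have hminf : (univ.filter fun m : Fin k => f m = 1).min'
        (Finset.card_pos.mp (by rw [(Finset.mem_filter.mp hf).2.2.2.2.2]; norm_num)) = a := by
      simp only [ha]; exact Finset.min'_singleton a
    have hming : (univ.filter fun m : Fin k => g m = 1).min'
        (Finset.card_pos.mp (by rw [(Finset.mem_filter.mp hg).2.2.2.2.2]; norm_num)) = b := by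
      simp only [hb]; exact Finset.min'_singleton b
    have hab : a = b := by rw [← hminf, ← hming]; exact hmin
    subst hab
    funext m
    have hWm : ((m : ℕ) < i ∧ f m ≠ 2) ↔ ((m : ℕ) < i ∧ g m ≠ 2) := by
      have h' := congrArg (fun s : Finset (Fin k) => m ∈ s) hW
      simp only [mem_filter, mem_univ, true_and] at h'
      exact iff_of_eq h'
    have hTm : (i < (m : ℕ) ∧ f m = 0) ↔ (i < (m : ℕ) ∧ g m = 0) := by
      have h' := congrArg (fun s : Finset (Fin k) => m ∈ s) hT
      simp only [mem_filter, mem_univ, true_and] at h'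
      exact iff_of_eq h'
    have hfm1 : f m = 1 ↔ m = a := huniq f a ha m
    have hgm1 : g m = 1 ↔ m = a := huniq g a hb m
    by_cases hma : m = a
    · rw [hfm1.mpr hma, hgm1.mpr hma]
    · have hf1 : f m ≠ 1 := fun h => hma (hfm1.mp h)
      have hg1 : g m ≠ 1 := fun h => hma (hgm1.mp h)
      rcases Nat.lt_trichotomy (m : ℕ) i with hmi | hmi | hmi
      · have h2 : f m ≠ 2 ↔ g m ≠ 2 := by
          constructor
          · intro h; exact (hWm.mp ⟨hmi, h⟩).2
          · intro h; exact (hWm.mpr ⟨hmi, h⟩).2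
        omega
      · have hmI : m = ⟨i, hik⟩ := Fin.ext hmi
        rw [hmI, hPf.2.1, hPg.2.1]
      · have h0 : f m = 0 ↔ g m = 0 := by
          constructor
          · intro h; exact (hTm.mp ⟨hmi, h⟩).2
          · intro h; exact (hTm.mpr ⟨hmi, h⟩).2
        omega
  · rintro ⟨⟨W, m₀⟩, T⟩ hd
    rw [Finset.mem_product] at hd
    obtain ⟨hsig, hT⟩ := hd
    rw [Finset.mem_sigma] at hsig
    obtain ⟨hWmem, hm₀W⟩ := hsig
    rw [mem_powersetCard] at hWmem hT
    obtain ⟨hWsub, hWcard'⟩ := hWmem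
    obtain ⟨hTsub, hTcard'⟩ := hT
    dsimp only at hm₀W hWsub hWcard' hTsub hTcard'
    have hWlt : ∀ x ∈ W, (x : ℕ) < i := by
      intro x hx
      have := hWsub hx
      simpa only [mem_filter, mem_univ, true_and] using this
    have hTgt : ∀ x ∈ T, i < (x : ℕ) := by
      intro x hx
      have := hTsub hx
      simpa only [mem_filter, mem_univ, true_and] using this
    have hm₀i : (m₀ : ℕ) < i := hWlt m₀ hm₀W
    set f : Fin k → Fin 3 := fun m =>
      if m = m₀ then 1 else if m ∈ W ∨ m ∈ T ∨ (m : ℕ) = i then 0 else 2 with hfdef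
    have hf1 : ∀ m : Fin k, f m = 1 ↔ m = m₀ := by
      intro m
      rw [hfdef]
      dsimp only
      split_ifs with h1 h2
      · simp [h1]
      · simp [h1]
      · simp [h1]
    have hf0 : ∀ m : Fin k, f m = 0 ↔ (m ≠ m₀ ∧ (m ∈ W ∨ m ∈ T ∨ (m : ℕ) = i)) := by
      intro m
      rw [hfdef]
      dsimp only
      split_ifs with h1 h2
      · simp [h1]
      · simp [h1, h2]
      · simp [h1, h2]
    have hfilter1 : (univ.filter fun m : Fin k => f m = 1) = {m₀} := by
      ext x; simp only [mem_filter, mem_univ, true_and, mem_singleton, hf1]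
    have hc1 : (univ.filter fun m : Fin k => (m : ℕ) < i ∧ f m = 0) = W.erase m₀ := by
      ext x
      simp only [mem_filter, mem_univ, true_and, mem_erase, hf0]
      constructor
      · rintro ⟨hxi, hne, hor⟩
        refine ⟨hne, ?_⟩
        rcases hor with h | h | h
        · exact h
        · exact absurd (hTgt x h) (by omega)
        · omega
      · rintro ⟨hne, hxW⟩
        exact ⟨hWlt x hxW, hne, Or.inl hxW⟩
    have hiI : f ⟨i, hik⟩ = 0 := by
      rw [hf0]
      constructor
      · intro h; rw [Fin.ext_iff] at h; simp at h; omega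
      · right; right; rfl
    have hTf : (univ.filter fun m : Fin k => i < (m : ℕ) ∧ f m = 0) = T := by
      ext x
      simp only [mem_filter, mem_univ, true_and, hf0]
      constructor
      · rintro ⟨hxi, hne, hor⟩
        rcases hor with h | h | h
        · exact absurd (hWlt x h) (by omega)
        · exact h
        · omega
      · intro hxT
        refine ⟨hTgt x hxT, ?_, Or.inr (Or.inl hxT)⟩
        intro h; rw [h] at hxT; exact absurd (hTgt m₀ hxT) (by omega)
    have hPf : Pf i j ℓ hik f := by
      refine ⟨?_, hiI, ⟨m₀, hm₀i, (hf1 m₀).mpr rfl⟩, ?_, ?_⟩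
      · rw [hc1, card_erase_of_mem hm₀W, hWcard']
        omega
      · have h3 := card_split3 (k := k) i (fun m => f m = 0)
        have hmid : (univ.filter fun m : Fin k => (m : ℕ) = i ∧ f m = 0) = {⟨i, hik⟩} := by
          ext x
          simp only [mem_filter, mem_univ, true_and, mem_singleton]
          constructor
          · rintro ⟨h1, _⟩; exact Fin.ext h1
          · rintro rfl; exact ⟨rfl, hiI⟩
        rw [hmid, card_singleton, hc1, hTf, card_erase_of_mem hm₀W, hWcard', hTcard'] at h3
        rw [h3]
        omega
      · rw [hfilter1, card_singleton]
    refine ⟨f, Finset.mem_filter.mpr ⟨Finset.mem_univ _, hPf⟩, ?_⟩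
    have hWf : (univ.filter fun m : Fin k => (m : ℕ) < i ∧ f m ≠ 2) = W := by
      ext x
      simp only [mem_filter, mem_univ, true_and]
      constructor
      · rintro ⟨hxi, hx2⟩
        rcases fin3_cases (f x) with h | h | h
        · rcases (hf0 x).mp h with ⟨hne, hor⟩
          rcases hor with hh | hh | hh
          · exact hh
          · exact absurd (hTgt x hh) (by omega)
          · omega
        · rw [(hf1 x).mp h]; exact hm₀W
        · exact absurd h hx2
      · intro hxW
        refine ⟨hWlt x hxW, ?_⟩
        by_cases hxm : x = m₀
        · rw [(hf1 x).mpr hxm]; decide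
        · rw [(hf0 x).mpr ⟨hxm, Or.inl hxW⟩]; decide
    have hminf : (univ.filter fun m : Fin k => f m = 1).min'
        (Finset.card_pos.mp (by
          rw [(Finset.mem_filter.mp (Finset.mem_filter.mpr
            ⟨Finset.mem_univ f, hPf⟩)).2.2.2.2.2]; norm_num)) = m₀ := by
      simp only [hfilter1]
      exact Finset.min'_singleton m₀
    refine Prod.ext ?_ hTf
    exact Sigma.ext hWf (heq_of_eq hminf)

end Aux

/-- Count of permutations `π` of `{1,…,k}` with `N_π(i,j) = ℓ`, `π(i+1) ≤ j` and
`π⁻¹(j+1) ≤ i` (0-indexed: `π(i) < j` and `π⁻¹(j) < i` on `Fin k`). -/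
theorem stmt_6 (k i j ℓ : ℕ) (hk : 2 ≤ k) (hik : i < k) (hjk : j < k)
    (hℓ1 : i + j ≤ k + ℓ) (hℓ2 : ℓ + 1 ≤ i) (hℓ3 : ℓ + 1 ≤ j) :
    ((Finset.univ.filter fun π : Equiv.Perm (Fin k) =>
        Nperm k π i j = ℓ ∧ ((π ⟨i, hik⟩ : ℕ) < j) ∧ ((π.symm ⟨j, hjk⟩ : ℕ) < i)).card : ℝ) =
      ((i ! : ℝ) * (j !) * ((k - i - 1)!) * ((k - j - 1)!)) /
        (((i - ℓ - 1)! : ℝ) * ((j - ℓ - 1)!) * ((k + ℓ - i - j)!) * (ℓ !)) := by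
  classical
  have count : (Finset.univ.filter fun π : Equiv.Perm (Fin k) =>
        Nperm k π i j = ℓ ∧ ((π ⟨i, hik⟩ : ℕ) < j) ∧ ((π.symm ⟨j, hjk⟩ : ℕ) < i)).card
      = i.choose (ℓ + 1) * (ℓ + 1) * ((k - i - 1).choose (j - ℓ - 1))
          * (j ! * (k - j - 1)!) := by
    have H : ∀ π ∈ (Finset.univ.filter fun π : Equiv.Perm (Fin k) =>
        Nperm k π i j = ℓ ∧ ((π ⟨i, hik⟩ : ℕ) < j) ∧ ((π.symm ⟨j, hjk⟩ : ℕ) < i)),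
        cls j ∘ ⇑π ∈ (univ : Finset (Fin k → Fin 3)).filter (Pf i j ℓ hik) := by
      intro π hπ
      exact Finset.mem_filter.mpr
        ⟨Finset.mem_univ _, (cond_iff hik hjk π).mp (Finset.mem_filter.mp hπ).2⟩
    rw [Finset.card_eq_sum_card_fiberwise H]
    have step : ∀ f ∈ (univ : Finset (Fin k → Fin 3)).filter (Pf i j ℓ hik),
        #((Finset.univ.filter fun π : Equiv.Perm (Fin k) =>
            Nperm k π i j = ℓ ∧ ((π ⟨i, hik⟩ : ℕ) < j) ∧ ((π.symm ⟨j, hjk⟩ : ℕ) < i)).filter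
          fun π : Equiv.Perm (Fin k) => cls j ∘ ⇑π = f)
        = j ! * (k - j - 1)! := by
      intro f hf
      have hPf := (Finset.mem_filter.mp hf).2
      have hsame : ((Finset.univ.filter fun π : Equiv.Perm (Fin k) =>
            Nperm k π i j = ℓ ∧ ((π ⟨i, hik⟩ : ℕ) < j) ∧ ((π.symm ⟨j, hjk⟩ : ℕ) < i)).filter
          fun π : Equiv.Perm (Fin k) => cls j ∘ ⇑π = f)
          = (univ : Finset (Equiv.Perm (Fin k))).filter
              fun π : Equiv.Perm (Fin k) => cls j ∘ ⇑π = f := by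
        rw [Finset.filter_filter]
        apply filter_congr
        intro π _
        constructor
        · rintro ⟨_, h⟩; exact h
        · intro h
          refine ⟨?_, h⟩
          apply (cond_iff hik hjk π).mpr
          rw [h]
          exact hPf
      rw [hsame]
      exact fiber_perm_card hjk f hPf.2.2.2.1 hPf.2.2.2.2
    rw [Finset.sum_congr rfl step, sum_const, smul_eq_mul,
      count_Pf hik hjk hℓ1 hℓ2 hℓ3]
  rw [count]
  have e1 : i.choose (ℓ + 1) * (ℓ + 1)! * (i - ℓ - 1)! = i ! := by
    have h := Nat.choose_mul_factorial_mul_factorial (n := i) (k := ℓ + 1) hℓ2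
    rwa [show i - (ℓ + 1) = i - ℓ - 1 by omega] at h
  have e2 : (k - i - 1).choose (j - ℓ - 1) * (j - ℓ - 1)! * (k + ℓ - i - j)! = (k - i - 1)! := by
    have hle : j - ℓ - 1 ≤ k - i - 1 := by omega
    have h := Nat.choose_mul_factorial_mul_factorial hle
    rwa [show (k - i - 1) - (j - ℓ - 1) = k + ℓ - i - j by omega] at h
  have hden : ((i - ℓ - 1)! : ℝ) * ((j - ℓ - 1)!) * ((k + ℓ - i - j)!) * (ℓ !) ≠ 0 := by
    positivity
  rw [eq_div_iff hden]
  have key : (i.choose (ℓ + 1) * (ℓ + 1) * ((k - i - 1).choose (j - ℓ - 1))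
        * (j ! * (k - j - 1)!)) * ((i - ℓ - 1)! * (j - ℓ - 1)! * (k + ℓ - i - j)! * ℓ !)
      = i ! * j ! * (k - i - 1)! * (k - j - 1)! := by
    rw [← e1, ← e2, Nat.factorial_succ]
    ring
  exact_mod_cast key
end

section
/- Let k ≥ 2 be an integer, let i ∈ {0,1,…,k−1} and j ∈ {0,1,…,k}. If a permutation π of {1,…,k} is chosen uniformly at random among all k! permutations, then E[X_k(i/k, j/k)·X_k((i+1)/k, j/k)] = ij(k−i−1+ij)/(k³(k−1)); equivalently, the sum over all permutations π of {1,…,k} of N_π(i,j)·N_π(i+1,j) equals (k−2)!·i·j·(k−i−1+ij). -/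
open Nat Finset

lemma card_filter_lt (k j : ℕ) (hj : j ≤ k) :
    (Finset.univ.filter fun x : Fin k => (x : ℕ) < j).card = j := by
  rw [Finset.card_nbij (i := fun x : Fin k => (x : ℕ)) (t := Finset.range j)]
  · exact Finset.card_range j
  · intro x hx
    simp only [mem_coe, Finset.mem_filter] at hx
    simpa using hx.2
  · intro x hx y hy hxy
    exact Fin.val_injective hxy
  · intro y hy
    simp only [Finset.coe_range, Set.mem_Iio] at hy
    exact ⟨⟨y, lt_of_lt_of_le hy hj⟩, by simp [hy], rfl⟩

lemma fiber1 (k : ℕ) (m x : Fin k) :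
    (Finset.univ.filter fun π : Equiv.Perm (Fin k) => π m = x).card = (k - 1)! := by
  have hconst : ∀ y z : Fin k,
      (Finset.univ.filter fun π : Equiv.Perm (Fin k) => π m = y).card =
      (Finset.univ.filter fun π : Equiv.Perm (Fin k) => π m = z).card := by
    intro y z
    apply Finset.card_bij' (i := fun π _ => Equiv.swap y z * π) (j := fun π _ => Equiv.swap y z * π)
    · intro π hπ
      simp only [Finset.mem_filter, Finset.mem_univ, true_and] at hπ ⊢
      simp [Equiv.Perm.mul_apply, hπ]
    · intro π hπ
      simp only [Finset.mem_filter, Finset.mem_univ, true_and] at hπ ⊢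
      simp [Equiv.Perm.mul_apply, hπ, Equiv.swap_apply_right]
    · intro π _; simp [← mul_assoc]
    · intro π _; simp [← mul_assoc]
  have htotal : (Finset.univ : Finset (Equiv.Perm (Fin k))).card =
      ∑ y : Fin k, (Finset.univ.filter fun π : Equiv.Perm (Fin k) => π m = y).card :=
    Finset.card_eq_sum_card_fiberwise (fun π _ => Finset.mem_univ (π m))
  have hk : 0 < k := m.pos
  have h2 : k * (Finset.univ.filter fun π : Equiv.Perm (Fin k) => π m = x).card = k ! := by
    have hcard : (Finset.univ : Finset (Equiv.Perm (Fin k))).card = k ! := by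
      rw [Finset.card_univ, Fintype.card_perm, Fintype.card_fin]
    rw [← hcard, htotal, Finset.sum_congr rfl (fun y _ => hconst y x), Finset.sum_const,
      Finset.card_univ, Fintype.card_fin, smul_eq_mul]
  obtain ⟨c, rfl⟩ : ∃ c, k = c + 1 := ⟨k - 1, by omega⟩
  simp only [Nat.add_sub_cancel]
  exact Nat.eq_of_mul_eq_mul_left hk (by rw [h2, Nat.factorial_succ])

lemma exists_swap2 {k : ℕ} (x x' y y' : Fin k) (hx : x ≠ x') (hy : y ≠ y') :
    ∃ σ : Equiv.Perm (Fin k), σ x = y ∧ σ x' = y' := by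
  refine ⟨Equiv.swap (Equiv.swap x y x') y' * Equiv.swap x y, ?_, ?_⟩
  · simp only [Equiv.Perm.mul_apply, Equiv.swap_apply_left]
    rw [Equiv.swap_apply_of_ne_of_ne]
    · exact fun h => hx (Equiv.injective (Equiv.swap x y) ((Equiv.swap_apply_left x y).trans h))
    · exact hy
  · simp [Equiv.Perm.mul_apply, Equiv.swap_apply_left]

lemma fiber2 (k : ℕ) (m m' x x' : Fin k) (hm : m ≠ m') (hx : x ≠ x') :
    (Finset.univ.filter fun π : Equiv.Perm (Fin k) => π m = x ∧ π m' = x').card = (k - 2)! := by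
  have hconst : ∀ y y' z z' : Fin k, y ≠ y' → z ≠ z' →
      (Finset.univ.filter fun π : Equiv.Perm (Fin k) => π m = y ∧ π m' = y').card =
      (Finset.univ.filter fun π : Equiv.Perm (Fin k) => π m = z ∧ π m' = z').card := by
    intro y y' z z' hy hz
    obtain ⟨σ, hσ1, hσ2⟩ := exists_swap2 y y' z z' hy hz
    apply Finset.card_bij' (i := fun π _ => σ * π) (j := fun π _ => σ⁻¹ * π)
    · intro π hπ
      simp only [Finset.mem_filter, Finset.mem_univ, true_and] at hπ ⊢
      simp [Equiv.Perm.mul_apply, hπ.1, hπ.2, hσ1, hσ2]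
    · intro π hπ
      simp only [Finset.mem_filter, Finset.mem_univ, true_and] at hπ ⊢
      constructor
      · rw [Equiv.Perm.mul_apply, hπ.1, ← hσ1]; simp
      · rw [Equiv.Perm.mul_apply, hπ.2, ← hσ2]; simp
    · intro π _; simp [← mul_assoc]
    · intro π _; simp [← mul_assoc]
  have htotal : (Finset.univ : Finset (Equiv.Perm (Fin k))).card =
      ∑ p ∈ (Finset.univ : Finset (Fin k)).offDiag,
        (Finset.univ.filter fun π : Equiv.Perm (Fin k) => (π m, π m') = p).card := by
    apply Finset.card_eq_sum_card_fiberwise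
    intro π _
    simp only [Finset.mem_coe, Finset.mem_offDiag, Finset.mem_univ, true_and]
    exact fun h => hm (Equiv.injective π h)
  have hk : 2 ≤ k := by
    have : Nontrivial (Fin k) := ⟨m, m', hm⟩
    have := Fintype.one_lt_card (α := Fin k)
    simp only [Fintype.card_fin] at this; omega
  have h2 : (k * k - k) * (Finset.univ.filter
      fun π : Equiv.Perm (Fin k) => π m = x ∧ π m' = x').card = k ! := by
    have hcard : (Finset.univ : Finset (Equiv.Perm (Fin k))).card = k ! := by
      rw [Finset.card_univ, Fintype.card_perm, Fintype.card_fin]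
    rw [← hcard, htotal]
    rw [Finset.sum_congr rfl (fun p hp => ?_), Finset.sum_const, Finset.offDiag_card,
      Finset.card_univ, Fintype.card_fin, smul_eq_mul]
    simp only [Finset.mem_offDiag, Finset.mem_univ, true_and] at hp
    simp only [Prod.ext_iff]
    exact hconst p.1 p.2 x x' hp hx
  obtain ⟨c, rfl⟩ : ∃ c, k = c + 2 := ⟨k - 2, by omega⟩
  simp only [Nat.add_sub_cancel]
  have hexp : (c + 2) * (c + 2) = (c + 2) * (c + 1) + (c + 2) := by ring
  have heq : (c + 2) * (c + 2) - (c + 2) = (c + 2) * (c + 1) := by omega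
  have hpos : 0 < (c + 2) * (c + 2) - (c + 2) := by rw [heq]; positivity
  apply Nat.eq_of_mul_eq_mul_left hpos
  rw [h2, heq, Nat.factorial_succ, Nat.factorial_succ]
  ring

lemma count1 (k j : ℕ) (hj : j ≤ k) (m : Fin k) :
    (Finset.univ.filter fun π : Equiv.Perm (Fin k) => (π m : ℕ) < j).card = j * (k - 1)! := by
  have h : (Finset.univ.filter fun π : Equiv.Perm (Fin k) => (π m : ℕ) < j).card =
      ∑ x ∈ (Finset.univ.filter fun x : Fin k => (x : ℕ) < j),
        ((Finset.univ.filter fun π : Equiv.Perm (Fin k) => (π m : ℕ) < j).filter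
          fun π => π m = x).card := by
    apply Finset.card_eq_sum_card_fiberwise
    intro π hπ
    simp only [Finset.mem_coe, Finset.mem_filter, Finset.mem_univ, true_and] at hπ ⊢
    exact hπ
  rw [h, Finset.sum_congr rfl (fun x hx => ?_), Finset.sum_const, card_filter_lt k j hj,
    smul_eq_mul]
  · simp only [Finset.mem_filter, Finset.mem_univ, true_and] at hx
    rw [Finset.filter_filter]
    rw [show (Finset.univ.filter fun π : Equiv.Perm (Fin k) => (π m : ℕ) < j ∧ π m = x) =
        (Finset.univ.filter fun π : Equiv.Perm (Fin k) => π m = x) from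
      Finset.filter_congr fun π _ => by constructor <;> intro h' <;>
        [exact h'.2; exact ⟨h' ▸ hx, h'⟩]]
    exact fiber1 k m x

lemma count2 (k j : ℕ) (hj : j ≤ k) (m m' : Fin k) (hm : m ≠ m') :
    (Finset.univ.filter fun π : Equiv.Perm (Fin k) => (π m : ℕ) < j ∧ (π m' : ℕ) < j).card =
      (j * j - j) * (k - 2)! := by
  have h : (Finset.univ.filter fun π : Equiv.Perm (Fin k) =>
        (π m : ℕ) < j ∧ (π m' : ℕ) < j).card =
      ∑ p ∈ (Finset.univ.filter fun x : Fin k => (x : ℕ) < j).offDiag,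
        ((Finset.univ.filter fun π : Equiv.Perm (Fin k) =>
          (π m : ℕ) < j ∧ (π m' : ℕ) < j).filter fun π => (π m, π m') = p).card := by
    apply Finset.card_eq_sum_card_fiberwise
    intro π hπ
    simp only [Finset.mem_coe, Finset.mem_filter, Finset.mem_univ, true_and] at hπ
    simp only [Finset.mem_coe, Finset.mem_offDiag, Finset.mem_filter, Finset.mem_univ, true_and]
    exact ⟨hπ.1, hπ.2, fun h' => hm (Equiv.injective π h')⟩
  rw [h, Finset.sum_congr rfl (fun p hp => ?_), Finset.sum_const, Finset.offDiag_card,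
    card_filter_lt k j hj, smul_eq_mul]
  · simp only [Finset.mem_offDiag, Finset.mem_filter, Finset.mem_univ, true_and] at hp
    rw [Finset.filter_filter]
    rw [show (Finset.univ.filter fun π : Equiv.Perm (Fin k) =>
          ((π m : ℕ) < j ∧ (π m' : ℕ) < j) ∧ (π m, π m') = p) =
        (Finset.univ.filter fun π : Equiv.Perm (Fin k) => π m = p.1 ∧ π m' = p.2) from
      Finset.filter_congr fun π _ => by
        simp only [Prod.ext_iff]
        constructor
        · intro h'; exact h'.2
        · intro h'; exact ⟨⟨h'.1 ▸ hp.1, h'.2 ▸ hp.2.1⟩, h'⟩]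
    exact fiber2 k m m' p.1 p.2 hm hp.2.2

lemma main_nat (k i j : ℕ) (hk : 2 ≤ k) (hi : i < k) (hj : j ≤ k) :
    ∑ π : Equiv.Perm (Fin k), Nperm k π i j * Nperm k π (i + 1) j =
      (k - 2)! * i * j * (k - i - 1 + i * j) := by
  classical
  set X : ℕ := (j * j - j) * (k - 2)! with hX
  set G : Fin k × Fin k → ℕ := fun p => ∑ π : Equiv.Perm (Fin k),
      (if (p.1 : ℕ) < i ∧ (π p.1 : ℕ) < j then 1 else 0) *
      (if (p.2 : ℕ) < i + 1 ∧ (π p.2 : ℕ) < j then 1 else 0) with hG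
  have hstep : ∑ π : Equiv.Perm (Fin k), Nperm k π i j * Nperm k π (i + 1) j =
      ∑ p ∈ (Finset.univ ×ˢ Finset.univ : Finset (Fin k × Fin k)), G p := by
    rw [Finset.sum_product]
    have h1 : ∀ π : Equiv.Perm (Fin k), Nperm k π i j * Nperm k π (i + 1) j =
        ∑ m : Fin k, ∑ m' : Fin k,
          (if (m : ℕ) < i ∧ (π m : ℕ) < j then 1 else 0) *
          (if (m' : ℕ) < i + 1 ∧ (π m' : ℕ) < j then 1 else 0) := by
      intro π
      rw [Nperm, Nperm, Finset.card_filter, Finset.card_filter, Finset.sum_mul_sum]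
    calc ∑ π : Equiv.Perm (Fin k), Nperm k π i j * Nperm k π (i + 1) j
        = ∑ π : Equiv.Perm (Fin k), ∑ m : Fin k, ∑ m' : Fin k,
          (if (m : ℕ) < i ∧ (π m : ℕ) < j then 1 else 0) *
          (if (m' : ℕ) < i + 1 ∧ (π m' : ℕ) < j then 1 else 0) :=
        Finset.sum_congr rfl (fun π _ => h1 π)
      _ = ∑ m : Fin k, ∑ π : Equiv.Perm (Fin k), ∑ m' : Fin k,
          (if (m : ℕ) < i ∧ (π m : ℕ) < j then 1 else 0) *
          (if (m' : ℕ) < i + 1 ∧ (π m' : ℕ) < j then 1 else 0) := Finset.sum_comm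
      _ = ∑ m : Fin k, ∑ m' : Fin k, G (m, m') :=
        Finset.sum_congr rfl (fun m _ => Finset.sum_comm)
  rw [hstep, ← Finset.diag_union_offDiag (Finset.univ : Finset (Fin k)),
    Finset.sum_union (Finset.disjoint_diag_offDiag _), Finset.sum_diag]
  -- the diagonal part
  have hdiag : ∑ m : Fin k, G (m, m) = i * (j * (k - 1)!) := by
    have h2 : ∀ m : Fin k, G (m, m) = if (m : ℕ) < i then j * (k - 1)! else 0 := by
      intro m
      simp only [hG]
      by_cases hmi : (m : ℕ) < i
      · rw [if_pos hmi]
        have h3 : ∀ π : Equiv.Perm (Fin k),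
            (if ((m, m).1 : ℕ) < i ∧ (π (m, m).1 : ℕ) < j then 1 else 0) *
            (if ((m, m).2 : ℕ) < i + 1 ∧ (π (m, m).2 : ℕ) < j then 1 else 0) =
            if (π m : ℕ) < j then 1 else 0 := by
          intro π
          by_cases hπ : (π m : ℕ) < j <;>
            simp [hmi, hπ, Nat.lt_succ_of_lt hmi]
        rw [Finset.sum_congr rfl (fun π _ => h3 π), ← Finset.card_filter]
        exact count1 k j hj m
      · rw [if_neg hmi]
        apply Finset.sum_eq_zero
        intro π _
        simp [hmi]
    rw [Finset.sum_congr rfl (fun m _ => h2 m), ← Finset.sum_filter, Finset.sum_const,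
      card_filter_lt k i hi.le, smul_eq_mul]
  -- the off-diagonal part
  have hH : ∀ p ∈ (Finset.univ : Finset (Fin k)).offDiag,
      G p = if (p.1 : ℕ) < i ∧ (p.2 : ℕ) < i + 1 then X else 0 := by
    rintro ⟨m, m'⟩ hp
    simp only [Finset.mem_offDiag, Finset.mem_univ, true_and] at hp
    simp only [hG]
    by_cases hc : ((m, m').1 : ℕ) < i ∧ ((m, m').2 : ℕ) < i + 1
    · rw [if_pos hc, hX]
      have h3 : ∀ π : Equiv.Perm (Fin k),
          (if ((m, m').1 : ℕ) < i ∧ (π (m, m').1 : ℕ) < j then 1 else 0) *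
          (if ((m, m').2 : ℕ) < i + 1 ∧ (π (m, m').2 : ℕ) < j then 1 else 0) =
          if (π m : ℕ) < j ∧ (π m' : ℕ) < j then 1 else 0 := by
        intro π
        by_cases h4 : (π m : ℕ) < j <;> by_cases h5 : (π m' : ℕ) < j <;>
          simp [hc.1, hc.2, h4, h5]
      rw [Finset.sum_congr rfl (fun π _ => h3 π), ← Finset.card_filter]
      exact count2 k j hj m m' hp
    · rw [if_neg hc]
      apply Finset.sum_eq_zero
      intro π _
      rcases Decidable.not_and_iff_or_not.mp hc with h4 | h4 <;> simp [h4]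
  have hoff : ∑ p ∈ (Finset.univ : Finset (Fin k)).offDiag, G p = i * (i * X) := by
    rw [Finset.sum_congr rfl hH]
    set H : Fin k × Fin k → ℕ :=
      fun p => if (p.1 : ℕ) < i ∧ (p.2 : ℕ) < i + 1 then X else 0 with hHdef
    have htot : ∑ p ∈ (Finset.univ ×ˢ Finset.univ : Finset (Fin k × Fin k)), H p =
        i * ((i + 1) * X) := by
      rw [Finset.sum_product]
      have hrow : ∀ m : Fin k, (∑ m' : Fin k, H (m, m')) =
          if (m : ℕ) < i then (i + 1) * X else 0 := by
        intro m
        by_cases hmi : (m : ℕ) < i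
        · rw [if_pos hmi]
          have hcell : ∀ m' : Fin k, H (m, m') = if (m' : ℕ) < i + 1 then X else 0 := by
            intro m'
            simp [hHdef, hmi]
          rw [Finset.sum_congr rfl (fun m' _ => hcell m'), ← Finset.sum_filter,
            Finset.sum_const, card_filter_lt k (i + 1) hi, smul_eq_mul]
        · rw [if_neg hmi]
          apply Finset.sum_eq_zero
          intro m' _
          simp [hHdef, hmi]
      rw [Finset.sum_congr rfl (fun m _ => hrow m), ← Finset.sum_filter, Finset.sum_const,
        card_filter_lt k i hi.le, smul_eq_mul]
    have hdiagH : ∑ p ∈ (Finset.univ : Finset (Fin k)).diag, H p = i * X := by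
      rw [Finset.sum_diag]
      have hcell : ∀ m : Fin k, H (m, m) = if (m : ℕ) < i then X else 0 := by
        intro m
        by_cases hmi : (m : ℕ) < i <;> simp [hHdef, hmi, Nat.lt_succ_of_lt] <;> intro h <;> omega
      rw [Finset.sum_congr rfl (fun m _ => hcell m), ← Finset.sum_filter, Finset.sum_const,
        card_filter_lt k i hi.le, smul_eq_mul]
    have hsplit : ∑ p ∈ (Finset.univ : Finset (Fin k)).diag, H p +
        ∑ p ∈ (Finset.univ : Finset (Fin k)).offDiag, H p =
        ∑ p ∈ (Finset.univ ×ˢ Finset.univ : Finset (Fin k × Fin k)), H p := by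
      rw [← Finset.diag_union_offDiag (Finset.univ : Finset (Fin k)),
        Finset.sum_union (Finset.disjoint_diag_offDiag _)]
    rw [htot, hdiagH] at hsplit
    have hring : i * ((i + 1) * X) = i * X + i * (i * X) := by ring
    rw [hring] at hsplit
    exact Nat.add_left_cancel hsplit
  rw [hdiag, hoff]
  -- final arithmetic
  obtain ⟨c, rfl⟩ : ∃ c, k = c + 2 := ⟨k - 2, by omega⟩
  obtain ⟨d, hd⟩ : ∃ d, c + 1 = i + d := ⟨c + 1 - i, by omega⟩
  have h1 : c + 2 - 2 = c := by omega
  have h2 : c + 2 - i - 1 = d := by omega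
  have h3 : (c + 2 - 1)! = (i + d) * c ! := by
    rw [show c + 2 - 1 = c + 1 from rfl, Nat.factorial_succ, hd]
  rw [hX, h1, h2, h3]
  rcases Nat.eq_zero_or_pos j with rfl | hjpos
  · simp
  obtain ⟨j', rfl⟩ : ∃ j', j = j' + 1 := ⟨j - 1, by omega⟩
  have h4 : (j' + 1) * (j' + 1) - (j' + 1) = (j' + 1) * j' := by
    rw [Nat.mul_succ, Nat.add_sub_cancel]
  rw [h4]
  ring

/-- `E[X_k(i/k,j/k)·X_k((i+1)/k,j/k)] = ij(k−i−1+ij)/(k³(k−1))`; equivalently,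
`∑_π N_π(i,j)·N_π(i+1,j) = (k−2)!·i·j·(k−i−1+ij)`. -/
theorem stmt_11 (k i j : ℕ) (hk : 2 ≤ k) (hi : i < k) (hj : j ≤ k) :
    (1 / (k ! : ℝ)) * ∑ π : Equiv.Perm (Fin k),
          ((Nperm k π i j : ℝ) / k) * ((Nperm k π (i + 1) j : ℝ) / k) =
        (i : ℝ) * j * ((k : ℝ) - i - 1 + i * j) / ((k : ℝ) ^ 3 * ((k : ℝ) - 1)) ∧
      ∑ π : Equiv.Perm (Fin k), Nperm k π i j * Nperm k π (i + 1) j =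
        (k - 2)! * i * j * (k - i - 1 + i * j) := by
  have hnat := main_nat k i j hk hi hj
  refine ⟨?_, hnat⟩
  have hk0 : (k : ℝ) ≠ 0 := by
    have : (0 : ℝ) < k := by exact_mod_cast Nat.lt_of_lt_of_le two_pos hk
    linarith
  have hk1 : (k : ℝ) - 1 ≠ 0 := by
    have : (2 : ℝ) ≤ k := by exact_mod_cast hk
    linarith
  have hfne : ((k - 2)! : ℝ) ≠ 0 := by
    exact_mod_cast Nat.cast_ne_zero.mpr (Nat.factorial_ne_zero _)
  have hfact : (k ! : ℝ) = (k : ℝ) * ((k : ℝ) - 1) * ((k - 2)! : ℝ) := by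
    obtain ⟨c, rfl⟩ : ∃ c, k = c + 2 := ⟨k - 2, by omega⟩
    rw [show c + 2 - 2 = c from rfl, show (c + 2)! = (c + 2) * ((c + 1) * c !) by
      rw [Nat.factorial_succ, Nat.factorial_succ]]
    push_cast
    ring
  have hsub : ((k - i - 1 : ℕ) : ℝ) = (k : ℝ) - i - 1 := by
    have h5 : (k - i - 1 : ℕ) = k - (i + 1) := by omega
    rw [h5, Nat.cast_sub hi]
    push_cast
    ring
  have hsum : (∑ π : Equiv.Perm (Fin k), (Nperm k π i j : ℝ) * (Nperm k π (i + 1) j : ℝ)) =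
      ((k - 2)! : ℝ) * i * j * ((k : ℝ) - i - 1 + i * j) := by
    have h6 := congrArg (Nat.cast : ℕ → ℝ) hnat
    push_cast at h6
    rw [hsub] at h6
    exact h6
  rw [Finset.sum_congr rfl (fun π _ => div_mul_div_comm
    ((Nperm k π i j : ℝ)) ((k : ℝ)) ((Nperm k π (i + 1) j : ℝ)) ((k : ℝ))),
    ← Finset.sum_div, hsum, hfact]
  field_simp
end

section
/- Let k ≥ 2 be an integer, let i ∈ {0,1,…,k−1} and j ∈ {0,1,…,k}. If a permutation π of {1,…,k} is chosen uniformly at random among all k! permutations, then the covariance of X_k(i/k, j/k) and X_k((i+1)/k, j/k) equals ij(k−i−1)(k−j)/(k⁴(k−1)). -/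
open Nat Finset

noncomputable def indj {k : ℕ} (j : ℕ) (x : Fin k) : ℝ := if (x : ℕ) < j then 1 else 0

lemma indj_mul_self {k : ℕ} (j : ℕ) (x : Fin k) : indj j x * indj j x = indj j x := by
  unfold indj; split_ifs <;> ring

lemma card_val_lt_s12 (k j : ℕ) (hj : j ≤ k) :
    (univ.filter fun x : Fin k => (x : ℕ) < j).card = j := by
  have h : (univ.filter fun x : Fin k => (x : ℕ) < j).card = (Finset.range j).card := by
    apply Finset.card_nbij (i := fun a : Fin k => (a : ℕ))
    · intro a ha
      simp only [Finset.mem_coe, mem_filter, mem_univ, true_and] at ha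
      simpa using ha
    · intro a _ b _ h; exact Fin.val_injective h
    · intro t ht
      simp only [Finset.coe_filter, Finset.coe_range, Set.mem_image, Set.mem_setOf_eq,
        Set.mem_Iio] at ht ⊢
      exact ⟨⟨t, lt_of_lt_of_le ht hj⟩, by simp [ht], rfl⟩
  rw [h, Finset.card_range]

lemma nperm_cast (k : ℕ) (π : Equiv.Perm (Fin k)) (i j : ℕ) :
    (Nperm k π i j : ℝ) = ∑ m ∈ univ.filter (fun m : Fin k => (m : ℕ) < i), indj j (π m) := by
  unfold Nperm indj
  rw [← Finset.filter_filter, Finset.card_filter]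
  push_cast
  rfl

lemma perm_sum_comp {k : ℕ} (σ : Equiv.Perm (Fin k)) (g : Equiv.Perm (Fin k) → ℝ) :
    ∑ π : Equiv.Perm (Fin k), g (π * σ) = ∑ π : Equiv.Perm (Fin k), g π :=
  Equiv.sum_comp (Equiv.mulRight σ) g

lemma sum1_const {k : ℕ} (j : ℕ) (a b : Fin k) :
    ∑ π : Equiv.Perm (Fin k), indj j (π a) = ∑ π : Equiv.Perm (Fin k), indj j (π b) := by
  have h := perm_sum_comp (Equiv.swap a b) (fun π => indj j (π b))
  simpa [Equiv.Perm.mul_apply, Equiv.swap_apply_right] using h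

lemma sum2_const {k : ℕ} (j : ℕ) (a b c d : Fin k) (hab : a ≠ b) (hcd : c ≠ d) :
    ∑ π : Equiv.Perm (Fin k), indj j (π c) * indj j (π d)
      = ∑ π : Equiv.Perm (Fin k), indj j (π a) * indj j (π b) := by
  set b' := Equiv.swap a c b with hb'def
  have hb'c : b' ≠ c := by
    intro h
    apply hab
    have : Equiv.swap a c b = Equiv.swap a c a := by
      rw [Equiv.swap_apply_left]; exact h
    exact ((Equiv.swap a c).injective this).symm
  set σ := Equiv.swap b' d * Equiv.swap a c with hσdef
  have hσa : σ a = c := by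
    rw [hσdef, Equiv.Perm.mul_apply, Equiv.swap_apply_left,
      Equiv.swap_apply_of_ne_of_ne (Ne.symm hb'c) hcd]
  have hσb : σ b = d := by
    rw [hσdef, Equiv.Perm.mul_apply, ← hb'def, Equiv.swap_apply_left]
  have h := perm_sum_comp σ (fun π => indj j (π a) * indj j (π b))
  calc ∑ π : Equiv.Perm (Fin k), indj j (π c) * indj j (π d)
      = ∑ π : Equiv.Perm (Fin k), indj j ((π * σ) a) * indj j ((π * σ) b) := by
        simp only [Equiv.Perm.mul_apply, hσa, hσb]
    _ = ∑ π : Equiv.Perm (Fin k), indj j (π a) * indj j (π b) := h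

lemma sum_indj_perm {k : ℕ} (j : ℕ) (hj : j ≤ k) (π : Equiv.Perm (Fin k)) :
    ∑ a : Fin k, indj j (π a) = (j : ℝ) := by
  have h1 : ∑ a : Fin k, indj j (π a)
      = ((univ.filter fun a : Fin k => ((π a : ℕ) < j)).card : ℝ) := by
    rw [Finset.card_filter]
    push_cast
    rfl
  have h2 : (univ.filter fun a : Fin k => ((π a : ℕ) < j)).card
      = (univ.filter fun x : Fin k => (x : ℕ) < j).card := by
    apply Finset.card_nbij (i := fun a : Fin k => π a)
    · intro a ha
      simp only [Finset.mem_coe, mem_filter, mem_univ, true_and] at ha ⊢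
      exact ha
    · intro a _ b _ h; exact π.injective h
    · intro x hx
      simp only [Finset.coe_filter, Set.mem_image, Set.mem_setOf_eq, Set.mem_univ,
        true_and] at hx ⊢
      exact ⟨π.symm x, by simp [hx], by simp⟩
  rw [h1, h2, card_val_lt_s12 k j hj]

/-- The covariance of `X_k(i/k, j/k)` and `X_k(i + 1/k, j/k)` under the uniform
distribution on the `k!` permutations equals `ij(k−i−1)(k−j)/(k⁴(k−1))`. -/
theorem stmt_12 (k i j : ℕ) (hk : 2 ≤ k) (hi : i < k) (hj : j ≤ k) :
    (1 / (k ! : ℝ)) * (∑ π : Equiv.Perm (Fin k),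
          ((Nperm k π (i) (j) : ℝ) / k) * ((Nperm k π (i + 1) (j) : ℝ) / k)) -
        ((1 / (k ! : ℝ)) * ∑ π : Equiv.Perm (Fin k), (Nperm k π (i) (j) : ℝ) / k) *
          ((1 / (k ! : ℝ)) * ∑ π : Equiv.Perm (Fin k), (Nperm k π (i + 1) (j) : ℝ) / k) =
      (i : ℝ) * j * ((k : ℝ) - i - 1) * ((k : ℝ) - j) / ((k : ℝ) ^ 4 * ((k : ℝ) - 1)) := by
  have hk0 : (k : ℝ) ≠ 0 := by positivity
  have hk1 : (k : ℝ) - 1 ≠ 0 := by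
    have : (2 : ℝ) ≤ (k : ℝ) := by exact_mod_cast hk
    nlinarith
  have hfac : (k ! : ℝ) ≠ 0 := by
    exact_mod_cast Nat.factorial_ne_zero k
  set a0 : Fin k := ⟨0, by omega⟩ with ha0
  set a1 : Fin k := ⟨1, by omega⟩ with ha1
  have h01 : a0 ≠ a1 := by
    simp only [ha0, ha1, Ne, Fin.mk.injEq]
    omega
  set S : ℝ := ∑ π : Equiv.Perm (Fin k), indj j (π a0) with hSdef
  set T : ℝ := ∑ π : Equiv.Perm (Fin k), indj j (π a0) * indj j (π a1) with hTdef
  have hcardP : (Fintype.card (Equiv.Perm (Fin k)) : ℝ) = (k ! : ℝ) := by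
    rw [Fintype.card_perm, Fintype.card_fin]
  -- key: the pair sum
  have key : ∀ a b : Fin k, (∑ π : Equiv.Perm (Fin k), indj j (π a) * indj j (π b))
      = if a = b then S else T := by
    intro a b
    split_ifs with h
    · subst h
      rw [Finset.sum_congr rfl fun π _ => indj_mul_self j (π a)]
      exact sum1_const j a a0
    · exact sum2_const j a0 a1 a b h01 h
  -- value of S
  have hS : (k : ℝ) * S = (k ! : ℝ) * j := by
    have hswap : ∑ a : Fin k, ∑ π : Equiv.Perm (Fin k), indj j (π a)
        = ∑ π : Equiv.Perm (Fin k), ∑ a : Fin k, indj j (π a) := Finset.sum_comm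
    have hL : ∑ a : Fin k, ∑ π : Equiv.Perm (Fin k), indj j (π a) = (k : ℝ) * S := by
      rw [Finset.sum_congr rfl fun a _ => sum1_const j a a0]
      rw [Finset.sum_const, Finset.card_univ, Fintype.card_fin, nsmul_eq_mul]
    have hR : ∑ π : Equiv.Perm (Fin k), ∑ a : Fin k, indj j (π a) = (k ! : ℝ) * j := by
      rw [Finset.sum_congr rfl fun π _ => sum_indj_perm j hj π]
      rw [Finset.sum_const, Finset.card_univ, nsmul_eq_mul, hcardP]
    rw [← hL, hswap, hR]
  -- value of T
  have hT : (k : ℝ) * ((k : ℝ) - 1) * T = (k ! : ℝ) * ((j : ℝ) ^ 2 - j) := by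
    have hD1 : ∑ π : Equiv.Perm (Fin k), (∑ a : Fin k, indj j (π a)) * (∑ b : Fin k, indj j (π b))
        = (k ! : ℝ) * ((j : ℝ) * j) := by
      rw [Finset.sum_congr rfl fun π _ => by rw [sum_indj_perm j hj π]]
      rw [Finset.sum_const, Finset.card_univ, nsmul_eq_mul, hcardP]
    have hD2 : ∑ π : Equiv.Perm (Fin k), (∑ a : Fin k, indj j (π a)) * (∑ b : Fin k, indj j (π b))
        = ∑ a : Fin k, ∑ b : Fin k, ∑ π : Equiv.Perm (Fin k), indj j (π a) * indj j (π b) := by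
      rw [Finset.sum_congr rfl fun π _ => Finset.sum_mul_sum univ univ _ _]
      rw [Finset.sum_comm]
      apply Finset.sum_congr rfl
      intro a _
      exact Finset.sum_comm
    have inner : ∀ a : Fin k, (∑ b : Fin k, if a = b then S else T) = (k : ℝ) * T + (S - T) := by
      intro a
      have hsplit : ∀ b : Fin k, (if a = b then S else T) = T + (if a = b then S - T else 0) := by
        intro b; split_ifs <;> ring
      rw [Finset.sum_congr rfl fun b _ => hsplit b, Finset.sum_add_distrib, Finset.sum_const,
        Finset.sum_ite_eq, if_pos (Finset.mem_univ a), Finset.card_univ, Fintype.card_fin,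
        nsmul_eq_mul]
    have hD3 : ∑ a : Fin k, ∑ b : Fin k, ∑ π : Equiv.Perm (Fin k), indj j (π a) * indj j (π b)
        = (k : ℝ) * ((k : ℝ) * T + (S - T)) := by
      rw [Finset.sum_congr rfl fun a _ => by rw [Finset.sum_congr rfl fun b _ => key a b, inner a]]
      rw [Finset.sum_const, Finset.card_univ, Fintype.card_fin, nsmul_eq_mul]
    have := hD1.symm.trans (hD2.trans hD3)
    linear_combination -this - hS
  -- moments
  set A : Finset (Fin k) := univ.filter (fun m : Fin k => (m : ℕ) < i) with hAdef
  set B : Finset (Fin k) := univ.filter (fun m : Fin k => (m : ℕ) < i + 1) with hBdef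
  have hA : A.card = i := card_val_lt_s12 k i (le_of_lt hi)
  have hB : B.card = i + 1 := card_val_lt_s12 k (i + 1) hi
  have hAB : ∀ m ∈ A, m ∈ B := by
    intro m hm
    simp only [hAdef, hBdef, mem_filter, mem_univ, true_and] at hm ⊢
    omega
  have hE1 : ∑ π : Equiv.Perm (Fin k), (Nperm k π i j : ℝ) = (i : ℝ) * S := by
    rw [Finset.sum_congr rfl fun π _ => nperm_cast k π i j, Finset.sum_comm,
      Finset.sum_congr rfl fun m _ => sum1_const j m a0, Finset.sum_const, hA, nsmul_eq_mul]
  have hE2 : ∑ π : Equiv.Perm (Fin k), (Nperm k π (i + 1) j : ℝ) = ((i : ℝ) + 1) * S := by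
    rw [Finset.sum_congr rfl fun π _ => nperm_cast k π (i + 1) j, Finset.sum_comm,
      Finset.sum_congr rfl fun m _ => sum1_const j m a0, Finset.sum_const, hB, nsmul_eq_mul]
    push_cast
    ring
  have hE12 : ∑ π : Equiv.Perm (Fin k), (Nperm k π i j : ℝ) * (Nperm k π (i + 1) j : ℝ)
      = (i : ℝ) * S + (i : ℝ) ^ 2 * T := by
    have step1 : ∀ π : Equiv.Perm (Fin k),
        (Nperm k π i j : ℝ) * (Nperm k π (i + 1) j : ℝ)
          = ∑ m ∈ A, ∑ m' ∈ B, indj j (π m) * indj j (π m') := by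
      intro π
      rw [nperm_cast k π i j, nperm_cast k π (i + 1) j, Finset.sum_mul_sum]
    rw [Finset.sum_congr rfl fun π _ => step1 π, Finset.sum_comm]
    have step2 : ∀ m ∈ A, (∑ π : Equiv.Perm (Fin k), ∑ m' ∈ B, indj j (π m) * indj j (π m'))
        = S + (i : ℝ) * T := by
      intro m hm
      rw [Finset.sum_comm]
      have : ∀ m' ∈ B, (∑ π : Equiv.Perm (Fin k), indj j (π m) * indj j (π m'))
          = if m = m' then S else T := fun m' _ => key m m'
      rw [Finset.sum_congr rfl this]
      have hsplit : ∀ m' : Fin k, (if m = m' then S else T) = T + (if m = m' then S - T else 0) := by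
        intro m'; split_ifs <;> ring
      rw [Finset.sum_congr rfl fun m' _ => hsplit m', Finset.sum_add_distrib, Finset.sum_const,
        Finset.sum_ite_eq, if_pos (hAB m hm), hB, nsmul_eq_mul]
      push_cast
      ring
    rw [Finset.sum_congr rfl step2, Finset.sum_const, hA, nsmul_eq_mul]
    ring
  -- convert sums of quotients
  have g1 : ∑ π : Equiv.Perm (Fin k),
        ((Nperm k π i j : ℝ) / k) * ((Nperm k π (i + 1) j : ℝ) / k)
      = (∑ π : Equiv.Perm (Fin k), (Nperm k π i j : ℝ) * (Nperm k π (i + 1) j : ℝ)) / ((k : ℝ) * k) := by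
    rw [Finset.sum_div]
    exact Finset.sum_congr rfl fun π _ => div_mul_div_comm _ _ _ _
  have g2 : ∑ π : Equiv.Perm (Fin k), (Nperm k π i j : ℝ) / k
      = (∑ π : Equiv.Perm (Fin k), (Nperm k π i j : ℝ)) / k := (Finset.sum_div _ _ _).symm
  have g3 : ∑ π : Equiv.Perm (Fin k), (Nperm k π (i + 1) j : ℝ) / k
      = (∑ π : Equiv.Perm (Fin k), (Nperm k π (i + 1) j : ℝ)) / k := (Finset.sum_div _ _ _).symm
  rw [g1, g2, g3, hE12, hE1, hE2]
  have hSval : S = (k ! : ℝ) * j / k := by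
    rw [eq_div_iff hk0]; linarith [hS]
  have hTval : T = (k ! : ℝ) * ((j : ℝ) ^ 2 - j) / ((k : ℝ) * ((k : ℝ) - 1)) := by
    rw [eq_div_iff (mul_ne_zero hk0 hk1)]; linear_combination hT
  rw [hSval, hTval]
  field_simp
  ring
end
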